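/- Orthogonality of multivariate Krawtchouk matrices: if A satisfies the K-condition A* p A = D, then for every degree N the Krawtchouk matrix Φ = (Ā)* satisfies Φ · B p̄ · Φ* = B D̄, where B is the diagonal matrix of multinomial coefficients of degree N and p̄, D̄ are the N-th symmetric powers of p and D (which are diagonal with entries p^m, D^m respectively). -/

import Mathlib

open MvPolynomial Matrix BigOperators

/-- Multi-indices of `d+1` entries with total degree `N`. -/
abbrev MIdx (d N : ℕ) := {m : Fin (d+1) → ℕ // ∑ i, m i = N}

instance (d N : ℕ) : Fintype (MIdx d N) :=
  Fintype.subtype (Finset.Nat.antidiagonalTuple (d+1) N)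
    (fun _ => Finset.Nat.mem_antidiagonalTuple)

/-- The `(m,n)` matrix element of the symmetric power of `A`:
the coefficient of `x^n` in `(Ax)^m`. -/
noncomputable def symPowEntry {R : Type} [CommSemiring R] {d : ℕ}
    (A : Matrix (Fin (d+1)) (Fin (d+1)) R) (m n : Fin (d+1) → ℕ) : R :=
  MvPolynomial.coeff (Finsupp.equivFunOnFinite.symm n)
    (∏ i, (∑ j, MvPolynomial.C (A i j) * MvPolynomial.X j) ^ m i)

/-- The `N`-th symmetric power of `A`, as a matrix indexed by multi-indices
of total degree `N`. -/
noncomputable def symPow {R : Type} [CommSemiring R] (d N : ℕ)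
    (A : Matrix (Fin (d+1)) (Fin (d+1)) R) : Matrix (MIdx d N) (MIdx d N) R :=
  fun m n => symPowEntry A m.1 n.1

/-- `Γ(g)_{mn}`: the coefficient of `x^n` in `(Σ_{μ,λ} g_{μλ} x_λ ∂_μ) x^m`. -/
noncomputable def gammaEntry {d : ℕ} (g : Matrix (Fin (d+1)) (Fin (d+1)) ℂ)
    (m n : Fin (d+1) → ℕ) : ℂ :=
  MvPolynomial.coeff (Finsupp.equivFunOnFinite.symm n)
    (∑ μ, ∑ lam, MvPolynomial.C (g μ lam) *
      (MvPolynomial.X lam * MvPolynomial.pderiv μ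
        (MvPolynomial.monomial (Finsupp.equivFunOnFinite.symm m) 1)))

/-- The degree-`N` generator `Γ(g)` of the symmetric representation. -/
noncomputable def gammaMat (d N : ℕ) (g : Matrix (Fin (d+1)) (Fin (d+1)) ℂ) :
    Matrix (MIdx d N) (MIdx d N) ℂ :=
  fun m n => gammaEntry g m.1 n.1

/-- The diagonal matrix `B` of multinomial coefficients of degree `N`. -/
noncomputable def multinomMat (d N : ℕ) : Matrix (MIdx d N) (MIdx d N) ℂ :=
  Matrix.diagonal fun m => (Nat.multinomial Finset.univ m.1 : ℂ)

/-! Both sides are coefficient matrices of `N`-th powers of bilinear forms. By the multinomial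
theorem the coefficient of `x^m y^n` in `(∑ᵢ pᵢ (conj(A) x)ᵢ (A y)ᵢ)^N` is the `(m, n)` entry of
`Φ · B p̄ · Φ*`. The K-condition says that this bilinear form is `∑ⱼ Dⱼ xⱼ yⱼ`, and the same
expansion with `A = 1` shows that the coefficient matrix of its `N`-th power is `B D̄`. -/

namespace Krawtchouk

variable {R : Type} [CommSemiring R] {d : ℕ}

noncomputable def linearForm (A : Matrix (Fin (d+1)) (Fin (d+1)) R) (i : Fin (d+1)) :
    MvPolynomial (Fin (d+1)) R :=
  ∑ j, C (A i j) * X j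

lemma symPowEntry_eq_coeff_prod_linearForm (A : Matrix (Fin (d+1)) (Fin (d+1)) R)
    (m n : Fin (d+1) → ℕ) :
    symPowEntry A m n = coeff (Finsupp.equivFunOnFinite.symm n) (∏ i, linearForm A i ^ m i) :=
  rfl

lemma linearForm_map {S : Type} [CommSemiring S] (f : R →+* S)
    (A : Matrix (Fin (d+1)) (Fin (d+1)) R) (i : Fin (d+1)) :
    linearForm (A.map f) i = MvPolynomial.map f (linearForm A i) := by
  simp [linearForm]

lemma symPowEntry_map {S : Type} [CommSemiring S] (f : R →+* S)
    (A : Matrix (Fin (d+1)) (Fin (d+1)) R) (m n : Fin (d+1) → ℕ) :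
    symPowEntry (A.map f) m n = f (symPowEntry A m n) := by
  simp only [symPowEntry_eq_coeff_prod_linearForm, linearForm_map, ← map_pow, ← map_prod, coeff_map]

lemma symPow_map {S : Type} [CommSemiring S] (f : R →+* S) (N : ℕ)
    (A : Matrix (Fin (d+1)) (Fin (d+1)) R) :
    symPow d N (A.map f) = (symPow d N A).map f := by
  ext m n
  exact symPowEntry_map f A m.1 n.1

lemma prod_univ_X_pow_eq_monomial {σ : Type} [Fintype σ] (k : σ → ℕ) :
    ∏ i, (X i : MvPolynomial σ R) ^ k i = monomial (Finsupp.equivFunOnFinite.symm k) 1 := by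
  simp [monomial_eq, Finsupp.prod_fintype]

lemma linearForm_diagonal (v : Fin (d+1) → R) (i : Fin (d+1)) :
    linearForm (diagonal v) i = C (v i) * X i := by
  simp [linearForm, diagonal_apply, apply_ite C]

lemma symPow_diagonal (N : ℕ) (v : Fin (d+1) → R) :
    symPow d N (diagonal v) = diagonal fun m => ∏ i, v i ^ m.1 i := by
  ext m n
  simp only [symPow, symPowEntry_eq_coeff_prod_linearForm, linearForm_diagonal, mul_pow,
    Finset.prod_mul_distrib, ← map_pow, ← map_prod, prod_univ_X_pow_eq_monomial, coeff_C_mul,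
    coeff_monomial, diagonal_apply, EmbeddingLike.apply_eq_iff_eq, Subtype.ext_iff]
  split_ifs <;> simp_all

lemma symPow_one (N : ℕ) : symPow d N (1 : Matrix (Fin (d+1)) (Fin (d+1)) R) = 1 := by
  simpa using symPow_diagonal (R := R) N (fun _ => 1)

/-- `∑ᵢ vᵢ (P x)ᵢ (Q y)ᵢ`, with `x` the outer variables and `y` those of the coefficient ring. -/
noncomputable def pairing (P Q : Matrix (Fin (d+1)) (Fin (d+1)) R) (v : Fin (d+1) → R) :
    MvPolynomial (Fin (d+1)) (MvPolynomial (Fin (d+1)) R) :=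
  ∑ i, C (C (v i)) * MvPolynomial.map C (linearForm P i) * C (linearForm Q i)

noncomputable def bilinPoly (M : Matrix (Fin (d+1)) (Fin (d+1)) R) :
    MvPolynomial (Fin (d+1)) (MvPolynomial (Fin (d+1)) R) :=
  ∑ j, ∑ l, C (C (M j l)) * X j * C (X l)

lemma pairing_eq_bilinPoly (P Q : Matrix (Fin (d+1)) (Fin (d+1)) R) (v : Fin (d+1) → R) :
    pairing P Q v = bilinPoly (Pᵀ * diagonal v * Q) := by
  have entry : ∀ j l, (Pᵀ * diagonal v * Q) j l = ∑ i, P i j * v i * Q i l := by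
    simp [mul_apply, diagonal_apply]
  simp only [pairing, bilinPoly, entry, linearForm, map_sum, _root_.map_mul, map_C, map_X,
    Finset.mul_sum, Finset.sum_mul]
  rw [Finset.sum_congr rfl fun i _ => Finset.sum_comm, Finset.sum_comm]
  refine Finset.sum_congr rfl fun j _ => ?_
  rw [Finset.sum_comm]
  exact Finset.sum_congr rfl fun l _ => Finset.sum_congr rfl fun i _ => by ring

noncomputable def coeffMat (N : ℕ) (F : MvPolynomial (Fin (d+1)) (MvPolynomial (Fin (d+1)) R)) :
    Matrix (MIdx d N) (MIdx d N) R :=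
  fun m n => coeff (Finsupp.equivFunOnFinite.symm n) (coeff (Finsupp.equivFunOnFinite.symm m) F)

lemma coeff_coeff_C_mul_map_C_mul_C (c : R) (F G : MvPolynomial (Fin (d+1)) R)
    (m n : Fin (d+1) →₀ ℕ) :
    coeff n (coeff m (C (C c) * MvPolynomial.map C F * C G)) = c * coeff m F * coeff n G := by
  rw [mul_right_comm, ← C_mul, coeff_C_mul, coeff_map, mul_comm, ← mul_assoc, ← C_mul,
    coeff_C_mul]
  ring

lemma coeffMat_pairing_pow (N : ℕ) (P Q : Matrix (Fin (d+1)) (Fin (d+1)) R)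
    (v : Fin (d+1) → R) :
    coeffMat N (pairing P Q v ^ N) = (symPow d N P)ᵀ
      * diagonal (fun k => (Nat.multinomial Finset.univ k.1 : R) * ∏ i, v i ^ k.1 i)
      * symPow d N Q := by
  have term : ∀ k : Fin (d+1) → ℕ, (Nat.multinomial Finset.univ k
        : MvPolynomial (Fin (d+1)) (MvPolynomial (Fin (d+1)) R))
        * ∏ i, (C (C (v i)) * MvPolynomial.map C (linearForm P i) * C (linearForm Q i)) ^ k i
      = C (C ((Nat.multinomial Finset.univ k : R) * ∏ i, v i ^ k i))
        * MvPolynomial.map C (∏ i, linearForm P i ^ k i) * C (∏ i, linearForm Q i ^ k i) := by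
    intro k
    simp only [mul_pow, Finset.prod_mul_distrib, _root_.map_mul, map_prod, map_pow, map_natCast]
    ring
  have mem : ∀ k : Fin (d+1) → ℕ, k ∈ Finset.piAntidiag Finset.univ N ↔ ∑ i, k i = N := by
    simp [Finset.mem_piAntidiag]
  ext m n
  rw [coeffMat, pairing, Finset.sum_pow_eq_sum_piAntidiag, coeff_sum, coeff_sum,
    Finset.sum_subtype _ mem, mul_apply]
  refine Finset.sum_congr rfl fun k _ => ?_
  simp only [term, coeff_coeff_C_mul_map_C_mul_C, mul_diagonal, transpose_apply, symPow,
    symPowEntry_eq_coeff_prod_linearForm]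
  ring

end Krawtchouk

open Krawtchouk

theorem krawtchouk_orthogonality_general (d N : ℕ)
    (A : Matrix (Fin (d+1)) (Fin (d+1)) ℂ)
    (p Dv : Fin (d+1) → ℝ)
    (hK : Aᴴ * Matrix.diagonal (fun i => (p i : ℂ)) * A
      = Matrix.diagonal fun i => (Dv i : ℂ)) :
    ∀ Φ : Matrix (MIdx d N) (MIdx d N) ℂ,
      Φ = (symPow d N A)ᴴ →
      Φ * (multinomMat d N * symPow d N (Matrix.diagonal fun i => (p i : ℂ))) * Φᴴ
        = multinomMat d N * symPow d N (Matrix.diagonal fun i => (Dv i : ℂ)) := by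
  rintro Φ rfl
  have hΦ : (symPow d N A)ᴴ = (symPow d N (A.map (starRingEnd ℂ)))ᵀ := by
    rw [symPow_map, conjTranspose, transpose_map]
    rfl
  have hB (v : Fin (d+1) → ℂ) : multinomMat d N * symPow d N (diagonal v)
      = diagonal fun k => (Nat.multinomial Finset.univ k.1 : ℂ) * ∏ i, v i ^ k.1 i := by
    rw [multinomMat, symPow_diagonal, diagonal_mul_diagonal]
  have hK' : (A.map (starRingEnd ℂ))ᵀ * diagonal (fun i => (p i : ℂ)) * A
      = (1 : Matrix (Fin (d+1)) (Fin (d+1)) ℂ)ᵀ * diagonal (fun i => (Dv i : ℂ)) * 1 := by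
    rwa [transpose_one, one_mul, mul_one, ← transpose_map]
  calc (symPow d N A)ᴴ * (multinomMat d N * symPow d N (diagonal fun i => (p i : ℂ)))
        * (symPow d N A)ᴴᴴ
      = coeffMat N (pairing (A.map (starRingEnd ℂ)) A (fun i => (p i : ℂ)) ^ N) := by
        rw [conjTranspose_conjTranspose, coeffMat_pairing_pow, hΦ, hB]
    _ = coeffMat N (pairing 1 1 (fun i => (Dv i : ℂ)) ^ N) := by
        rw [pairing_eq_bilinPoly, pairing_eq_bilinPoly, hK']
    _ = multinomMat d N * symPow d N (diagonal fun i => (Dv i : ℂ)) := by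
        rw [coeffMat_pairing_pow, symPow_one, hB, transpose_one, one_mul, mul_one]

/-- Orthogonality of multivariate Krawtchouk matrices: under the K-condition
`A* p A = D`, the Krawtchouk matrix `Φ = (Ā)*` satisfies
`Φ · B p̄ · Φ* = B D̄`. -/
theorem krawtchouk_orthogonality (d N : ℕ)
    (A : Matrix (Fin (d+1)) (Fin (d+1)) ℂ)
    (p Dv : Fin (d+1) → ℝ) (hp : ∀ i, 0 < p i) (hp1 : ∑ i, p i = 1)
    (hD : ∀ i, 0 < Dv i)
    (hK : Aᴴ * Matrix.diagonal (fun i => (p i : ℂ)) * A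
      = Matrix.diagonal fun i => (Dv i : ℂ)) :
    ∀ Φ : Matrix (MIdx d N) (MIdx d N) ℂ,
      Φ = (symPow d N A)ᴴ →
      Φ * (multinomMat d N * symPow d N (Matrix.diagonal fun i => (p i : ℂ))) * Φᴴ
        = multinomMat d N * symPow d N (Matrix.diagonal fun i => (Dv i : ℂ)) :=
  krawtchouk_orthogonality_general d N A p Dv hK
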